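/- With g_L and g_R the unit tangent direction vectors from p_i to the circle of radius r around p_j (d = ‖p_j - p_i‖ > r), the inner product satisfies g_L · g_R = cos θ = 1 - 2(r/d)². -/

import Mathlib

/-!
Relative to `p_i`, the tangent points are `(d - k) g ± h g⊥` with `g, g⊥` orthonormal. Both
therefore have squared length `(d - k)² + h² = d² - r²`, while their inner product is
`(d - k)² - h² = (d² - r²)(d² - 2r²)/d²`; the cosine is the quotient.
-/

open scoped RealInnerProductSpace

section Orthonormal

variable {E : Type*} [NormedAddCommGroup E] [InnerProductSpace ℝ E] {g e : E}

lemma norm_smul_add_smul_sq (hg : ‖g‖ = 1) (he : ‖e‖ = 1) (hge : ⟪g, e⟫ = 0) (a b : ℝ) :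
    ‖a • g + b • e‖ ^ 2 = a ^ 2 + b ^ 2 := by
  rw [sq, norm_add_sq_eq_norm_sq_add_norm_sq_real
    (by rw [real_inner_smul_left, real_inner_smul_right, hge, mul_zero, mul_zero]),
    norm_smul, norm_smul, hg, he, Real.norm_eq_abs, Real.norm_eq_abs]
  simp only [mul_one, abs_mul_abs_self, sq]

lemma inner_smul_add_smul_smul_sub_smul (hg : ‖g‖ = 1) (he : ‖e‖ = 1) (hge : ⟪g, e⟫ = 0)
    (a b : ℝ) : ⟪a • g + b • e, a • g - b • e⟫ = a ^ 2 - b ^ 2 := by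
  have hgg : ⟪g, g⟫ = 1 := by rw [real_inner_self_eq_norm_sq, hg, one_pow]
  have hee : ⟪e, e⟫ = 1 := by rw [real_inner_self_eq_norm_sq, he, one_pow]
  have heg : ⟪e, g⟫ = 0 := by rw [real_inner_comm, hge]
  simp only [inner_add_left, inner_sub_right, real_inner_smul_left, real_inner_smul_right,
    hgg, hee, hge, heg]
  ring

-- Also true for `a = b = 0`: both sides are then `0` by the junk values `0⁻¹ = 0`, `0 / 0 = 0`.
lemma inner_normalize_smul_add_smul_smul_sub_smul (hg : ‖g‖ = 1) (he : ‖e‖ = 1)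
    (hge : ⟪g, e⟫ = 0) (a b : ℝ) :
    ⟪‖a • g + b • e‖⁻¹ • (a • g + b • e), ‖a • g - b • e‖⁻¹ • (a • g - b • e)⟫
      = (a ^ 2 - b ^ 2) / (a ^ 2 + b ^ 2) := by
  have hsub : ‖a • g - b • e‖ = ‖a • g + b • e‖ := by
    rw [sub_eq_add_neg, ← neg_smul]
    refine (sq_eq_sq₀ (norm_nonneg _) (norm_nonneg _)).1 ?_
    rw [norm_smul_add_smul_sq hg he hge, norm_smul_add_smul_sq hg he hge, neg_sq]
  rw [real_inner_smul_left, real_inner_smul_right, inner_smul_add_smul_smul_sub_smul hg he hge,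
    hsub, ← norm_smul_add_smul_sq hg he hge, ← mul_assoc, ← mul_inv, ← sq, div_eq_inv_mul]

end Orthonormal

lemma tangent_cos_eq (r d : ℝ) (hrd : r ^ 2 < d ^ 2) :
    ((d - r ^ 2 / d) ^ 2 - (r * √(d ^ 2 - r ^ 2) / d) ^ 2)
      / ((d - r ^ 2 / d) ^ 2 + (r * √(d ^ 2 - r ^ 2) / d) ^ 2) = 1 - 2 * (r / d) ^ 2 := by
  have hd : d ≠ 0 := by rintro rfl; nlinarith [sq_nonneg r]
  have hs : √(d ^ 2 - r ^ 2) ^ 2 = d ^ 2 - r ^ 2 := Real.sq_sqrt (by linarith)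
  have hnum : (d - r ^ 2 / d) ^ 2 - (r * √(d ^ 2 - r ^ 2) / d) ^ 2
      = (d ^ 2 - r ^ 2) * (d ^ 2 - 2 * r ^ 2) / d ^ 2 := by
    rw [div_pow, mul_pow, hs]; field_simp; ring
  have hden : (d - r ^ 2 / d) ^ 2 + (r * √(d ^ 2 - r ^ 2) / d) ^ 2 = d ^ 2 - r ^ 2 := by
    rw [div_pow, mul_pow, hs]; field_simp; ring
  rw [hnum, hden]
  field_simp [(sub_pos.2 hrd).ne']

/-- With `g_L` and `g_R` the unit tangent direction vectors from `p_i` to the circle of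
radius `r` around `p_j` (with `d = ‖p_j - p_i‖ > r`), the inner product satisfies
`⟪g_L, g_R⟫ = cos θ = 1 - 2 (r/d)²`. -/
theorem stmt_9 (pi pj g gperp pjL pjR gL gR : EuclideanSpace ℝ (Fin 2))
    (r d h k : ℝ) (hr : 0 < r) (hd : d = ‖pj - pi‖) (hdr : r < d)
    (hg : g = (d⁻¹ : ℝ) • (pj - pi))
    (hperp : ⟪g, gperp⟫ = 0) (hperpnorm : ‖gperp‖ = 1)
    (hh : h = r * Real.sqrt (d ^ 2 - r ^ 2) / d) (hk : k = r ^ 2 / d)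
    (hL : pjL = pj - k • g + h • gperp) (hR : pjR = pj - k • g - h • gperp)
    (hgL : gL = (‖pjL - pi‖⁻¹ : ℝ) • (pjL - pi))
    (hgR : gR = (‖pjR - pi‖⁻¹ : ℝ) • (pjR - pi)) :
    ⟪gL, gR⟫ = 1 - 2 * (r / d) ^ 2 := by
  have hd0 : 0 < d := hr.trans hdr
  have hpj : pj = pi + d • g := by
    rw [hg, smul_smul, mul_inv_cancel₀ hd0.ne', one_smul, add_sub_cancel]
  have hgnorm : ‖g‖ = 1 := by
    rw [hg, norm_smul, ← hd, Real.norm_of_nonneg (inv_nonneg.2 hd0.le), inv_mul_cancel₀ hd0.ne']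
  have hLpi : pjL - pi = (d - k) • g + h • gperp := by rw [hL, hpj]; module
  have hRpi : pjR - pi = (d - k) • g - h • gperp := by rw [hR, hpj]; module
  rw [hgL, hgR, hLpi, hRpi, inner_normalize_smul_add_smul_smul_sub_smul hgnorm hperpnorm hperp,
    hh, hk]
  exact tangent_cos_eq r d (by nlinarith)
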